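/- Let G be a countably infinite amenable group and T a finite tiling of G. Then for every ε > 0 there exist δ > 0 and a nonempty finite subset K of G such that for every g ∈ G and every (K, δ)-invariant nonempty finite subset F of G, the union of those Tg-tiles that are contained in F has proportion larger than 1 − ε in F; that is, |⋃{T' ∈ Tg : T' ⊆ F}| / |F| > 1 − ε, where Tg = {T'g : T' ∈ T}. -/

import Mathlib

open Filter Set
open scoped ENNReal

noncomputable section

/-! ### Basic combinatorial operations on finsets (with classical decidability) -/

/-- Symmetric difference of two finsets. -/
noncomputable def finsetSymmDiff {G : Type*} (A B : Finset G) : Finset G :=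
  letI : DecidableEq G := Classical.decEq G
  (A \ B) ∪ (B \ A)

/-- Left translate `gF = {g*f : f ∈ F}` of a finset. -/
noncomputable def finsetLMul {G : Type*} [Group G] (g : G) (F : Finset G) : Finset G :=
  letI : DecidableEq G := Classical.decEq G
  F.image (fun x => g * x)

/-- Pointwise product `TF = {t*f : t ∈ T, f ∈ F}` of finsets. -/
noncomputable def finsetMul {G : Type*} [Group G] (T F : Finset G) : Finset G :=
  letI : DecidableEq G := Classical.decEq G
  Finset.image₂ (· * ·) T F

/-! ### Følner sequences and amenability -/

/-- `F` is a Følner sequence of `G`: a sequence of nonempty finite subsets with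
`|F n △ g F n| / |F n| → 0` for every `g ∈ G`. -/
def IsFolnerSeq {G : Type*} [Group G] (F : ℕ → Finset G) : Prop :=
  (∀ n, (F n).Nonempty) ∧
    ∀ g : G, Filter.Tendsto
      (fun n => ((finsetSymmDiff (F n) (finsetLMul g (F n))).card : ℝ) / ((F n).card : ℝ))
      Filter.atTop (nhds 0)

/-- A countable group is amenable if it admits a Følner sequence. -/
def IsAmenable (G : Type*) [Group G] : Prop := ∃ F : ℕ → Finset G, IsFolnerSeq F

/-- A subset `S ⊆ G` is syndetic if `G = F S` for some finite `F`. -/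
def IsSyndetic {G : Type*} [Group G] (S : Set G) : Prop :=
  ∃ F : Finset G, ∀ g : G, ∃ f ∈ F, ∃ s ∈ S, g = f * s

/-- `B(F,T) = {g ∈ G : Tg ∩ F ≠ ∅ and Tg ∩ (G∖F) ≠ ∅}`. -/
def folnerBoundary {G : Type*} [Group G] (T F : Finset G) : Set G :=
  {g : G | (∃ t ∈ T, t * g ∈ F) ∧ (∃ t ∈ T, t * g ∉ F)}

/-- `F` is `(T,ε)`-invariant if `|B(F,T)| / |F| < ε`. -/
def IsTInvariant {G : Type*} [Group G] (T : Finset G) (ε : ℝ) (F : Finset G) : Prop :=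
  ((folnerBoundary T F).ncard : ℝ) / (F.card : ℝ) < ε

/-! ### Tilings -/

/-- The right translate `Sc = {s*c : s ∈ S}` of a set `S ⊆ G`. -/
def tileTranslate {G : Type*} [Group G] (S : Set G) (c : G) : Set G := (fun s => s * c) '' S

/-- A tiling of `G` is a collection of pairwise disjoint nonempty finite subsets covering `G`. -/
def IsTiling {G : Type*} [Group G] (T : Set (Set G)) : Prop :=
  (∀ t ∈ T, t.Finite ∧ t.Nonempty) ∧ ⋃₀ T = Set.univ ∧
    ∀ t ∈ T, ∀ t' ∈ T, t ≠ t' → Disjoint t t'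

/-- The center `C(S) = {c ∈ G : Sc ∈ T}` of a shape `S` with respect to a tiling `T`. -/
def tilingCenter {G : Type*} [Group G] (T : Set (Set G)) (S : Set G) : Set G :=
  {c : G | tileTranslate S c ∈ T}

/-- `T` is a finite tiling with set of shapes `Shapes`. -/
def IsFiniteTiling {G : Type*} [Group G] (T : Set (Set G)) (Shapes : Set (Set G)) : Prop :=
  IsTiling T ∧ Shapes.Finite ∧ (∀ S ∈ Shapes, S.Finite ∧ S.Nonempty) ∧
    ∀ t ∈ T, ∃ S ∈ Shapes, ∃ c : G, t = tileTranslate S c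

/-! ### Shifts and subshifts -/

/-- The full `G`-shift on `K^G`: `(σ g x) h = x (h g)`. -/
def shift (G K : Type*) [Group G] : G → (G → K) → (G → K) := fun g x h => x (h * g)

/-- A subshift is a closed shift-invariant subset of `K^G`. -/
def IsSubshift {G K : Type*} [Group G] [TopologicalSpace K] (M : Set (G → K)) : Prop :=
  IsClosed M ∧ ∀ g : G, ∀ x ∈ M, shift G K g x ∈ M

/-- A minimal subshift: a nonempty subshift in which every orbit is dense. -/
def IsMinimalSubshift {G K : Type*} [Group G] [TopologicalSpace K] (M : Set (G → K)) : Prop :=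
  M.Nonempty ∧ IsSubshift M ∧ ∀ x ∈ M, M ⊆ closure {y | ∃ g : G, y = shift G K g x}

/-! ### Group actions -/

/-- A continuous action of `G` on `X` given by `act : G → X → X`. -/
structure IsContAction {G X : Type*} [Group G] [TopologicalSpace X] (act : G → X → X) : Prop where
  one : ∀ x, act 1 x = x
  mul : ∀ g h x, act (g * h) x = act g (act h x)
  cont : ∀ g, Continuous (act g)

/-- The restriction of an action to an invariant subset (junk value outside). -/
noncomputable def restrictAct {G X : Type*} (act : G → X → X) (M : Set X) : G → M → M :=
  fun g x =>
    letI := Classical.propDecidable (act g (x : X) ∈ M)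
    if h : act g (x : X) ∈ M then ⟨act g (x : X), h⟩ else x

/-- A minimal subsystem: a nonempty closed invariant subset in which every orbit is dense. -/
def IsMinimalSubsystem {G X : Type*} [TopologicalSpace X] (act : G → X → X) (M : Set X) : Prop :=
  M.Nonempty ∧ IsClosed M ∧ (∀ g : G, ∀ x ∈ M, act g x ∈ M) ∧
    ∀ x ∈ M, M ⊆ closure {y | ∃ g : G, y = act g x}

/-! ### Compatible metrics -/

/-- `d` is a compatible metric on the topological space `X`. -/
structure IsCompatibleMetric (X : Type*) [TopologicalSpace X] (d : X → X → ℝ) : Prop where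
  refl : ∀ x, d x x = 0
  eq_of : ∀ {x y}, d x y = 0 → x = y
  symm : ∀ x y, d x y = d y x
  triangle : ∀ x y z, d x z ≤ d x y + d y z
  compatible : ∀ s : Set X, IsOpen s ↔ ∀ x ∈ s, ∃ ε > 0, {y | d x y < ε} ⊆ s

/-! ### Widim, polyhedra, mean dimension -/

/-- `f` is an `ε`-embedding with respect to the (pseudo)metric `d`. -/
def IsEpsEmbedding {X Y : Type*} [TopologicalSpace X] [TopologicalSpace Y]
    (d : X → X → ℝ) (ε : ℝ) (f : X → Y) : Prop :=
  Continuous f ∧ ∀ x y, f x = f y → d x y < ε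

/-- There is an `ε`-embedding of `X` into (the space of) a finite simplicial complex of
dimension at most `n` sitting in some Euclidean space. -/
def ExistsPolyEmbedding {X : Type*} [TopologicalSpace X] (d : X → X → ℝ) (ε : ℝ) (n : ℕ) : Prop :=
  ∃ (N : ℕ) (S : Geometry.SimplicialComplex ℝ (EuclideanSpace ℝ (Fin N))),
    S.faces.Finite ∧ (∀ s ∈ S.faces, s.card ≤ n + 1) ∧
    ∃ f : X → S.space, IsEpsEmbedding d ε f

/-- `Widim_ε(X,d)`: the least dimension of a (finite) polyhedron admitting an
`ε`-embedding of `X`. -/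
noncomputable def widim {X : Type*} [TopologicalSpace X] (d : X → X → ℝ) (ε : ℝ) : ℝ≥0∞ :=
  sInf {x : ℝ≥0∞ | ∃ n : ℕ, x = (n : ℝ≥0∞) ∧ ExistsPolyEmbedding d ε n}

/-- The dynamical metric `ρ_F(x,y) = max_{g ∈ F} ρ(gx,gy)`. -/
noncomputable def dynDist {G X : Type*} (act : G → X → X) (d : X → X → ℝ) (F : Finset G)
    (x y : X) : ℝ :=
  sSup ((fun g => d (act g x) (act g y)) '' (F : Set G))

/-- The mean dimension of the action `act` computed with the metric `d` and the Følner
sequence `F`: `lim_{ε→0} lim_n Widim_ε(X,ρ_{F n})/|F n|` (the limit in `ε` is a supremum by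
monotonicity, and the inner limit is a limsup). -/
noncomputable def mdimWith {G X : Type*} [Group G] [TopologicalSpace X]
    (act : G → X → X) (d : X → X → ℝ) (F : ℕ → Finset G) : ℝ≥0∞ :=
  ⨆ ε ∈ Set.Ioi (0 : ℝ),
    Filter.limsup (fun n => widim (dynDist act d (F n)) ε / ((F n).card : ℝ≥0∞)) Filter.atTop

/-- The action `act` has mean dimension `r`: for every compatible metric and every Følner
sequence the computed value is `r` (the value is independent of these choices). -/
def HasMdim {G X : Type*} [Group G] [TopologicalSpace X] (act : G → X → X) (r : ℝ≥0∞) : Prop :=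
  ∀ d : X → X → ℝ, IsCompatibleMetric X d →
    ∀ F : ℕ → Finset G, IsFolnerSeq F → mdimWith act d F = r

/-! ### Covering dimension -/

/-- The Lebesgue covering dimension of `X` is at most `n`: every open cover has an open
refinement of multiplicity at most `n+1`. -/
def CovDimLE (X : Type*) [TopologicalSpace X] (n : ℕ) : Prop :=
  ∀ U : Set (Set X), (∀ u ∈ U, IsOpen u) → ⋃₀ U = Set.univ →
    ∃ V : Set (Set X), (∀ v ∈ V, IsOpen v) ∧ ⋃₀ V = Set.univ ∧
      (∀ v ∈ V, ∃ u ∈ U, v ⊆ u) ∧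
      ∀ x : X, {v | v ∈ V ∧ x ∈ v}.Finite ∧ {v | v ∈ V ∧ x ∈ v}.ncard ≤ n + 1

/-- The Lebesgue covering dimension, as an extended nonnegative real. -/
noncomputable def covDim (X : Type*) [TopologicalSpace X] : ℝ≥0∞ :=
  sInf {x : ℝ≥0∞ | ∃ n : ℕ, x = (n : ℝ≥0∞) ∧ CovDimLE X n}

/-- `X` is finite-dimensional. -/
def TopFiniteDimensional (X : Type*) [TopologicalSpace X] : Prop := ∃ n : ℕ, CovDimLE X n

/-! ### Density -/

/-- The density `δ(J)` of a subset `J ⊆ G`: the supremum over all Følner sequences of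
`limsup_n |J ∩ F n| / |F n|`. -/
noncomputable def upperDensity (G : Type*) [Group G] (J : Set G) : ℝ≥0∞ :=
  ⨆ (F : ℕ → Finset G) (_ : IsFolnerSeq F),
    Filter.limsup (fun n =>
      letI : ∀ g : G, Decidable (g ∈ J) := fun g => Classical.propDecidable _
      (((F n).filter (fun g => g ∈ J)).card : ℝ≥0∞) / ((F n).card : ℝ≥0∞)) Filter.atTop


/-!
Let `K` contain every shape. A point of `F` not covered by a `Tg`-tile inside `F` lies in a tile
`S (c g)` that meets both `F` and its complement, so `c g ∈ B(F, K)` and the point lies in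
`K · B(F, K)`. Hence at most `|K| |B(F, K)| < |K| δ |F|` points of `F` are uncovered, and
`δ = ε / |K|` works.
-/

open scoped Pointwise

section TilingCount

variable {G : Type*} [Group G]

lemma tileTranslate_tileTranslate (S : Set G) (c g : G) :
    tileTranslate (tileTranslate S c) g = tileTranslate S (c * g) := by
  simp only [tileTranslate, Set.image_image, mul_assoc]

lemma folnerBoundary_subset_inv_mul (K F : Finset G) :
    folnerBoundary K F ⊆ (K : Set G)⁻¹ * F := by
  rintro b ⟨⟨t, ht, htb⟩, -⟩
  exact ⟨t⁻¹, by simpa using ht, t * b, htb, by group⟩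

lemma folnerBoundary_finite (K F : Finset G) : (folnerBoundary K F).Finite :=
  (K.finite_toSet.inv.mul F.finite_toSet).subset (folnerBoundary_subset_inv_mul K F)

lemma mem_folnerBoundary_of_not_subset {K F : Finset G} {S : Set G} (hSK : S ⊆ K) {s c : G}
    (hs : s ∈ S) (hsF : s * c ∈ F) (hnot : ¬ tileTranslate S c ⊆ F) :
    c ∈ folnerBoundary K F := by
  obtain ⟨_, ⟨s', hs', rfl⟩, hs'F⟩ := Set.not_subset.mp hnot
  exact ⟨⟨s, hSK hs, hsF⟩, ⟨s', hSK hs', hs'F⟩⟩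

theorem sdiff_sUnion_translate_subset_mul_folnerBoundary {T : Set (Set G)} {K : Finset G}
    (hcover : ⋃₀ T = univ) (hK : ∀ t ∈ T, ∃ S ⊆ (K : Set G), ∃ c, t = tileTranslate S c)
    (g : G) (F : Finset G) :
    (F : Set G) \ ⋃₀ {t | (∃ t' ∈ T, t = tileTranslate t' g) ∧ t ⊆ F} ⊆
      (K : Set G) * folnerBoundary K F := by
  rintro x ⟨hxF, hxU⟩
  obtain ⟨_, ht, hxt⟩ : x * g⁻¹ ∈ ⋃₀ T := hcover ▸ trivial
  obtain ⟨S, hSK, c, rfl⟩ := hK _ ht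
  obtain ⟨s, hs, hsx : s * c = x * g⁻¹⟩ := hxt
  have hx : s * (c * g) = x := by rw [← mul_assoc, hsx, inv_mul_cancel_right]
  have hnot : ¬ tileTranslate S (c * g) ⊆ F := fun hsub =>
    hxU ⟨_, ⟨⟨_, ht, rfl⟩, by rwa [tileTranslate_tileTranslate]⟩,
      by rw [tileTranslate_tileTranslate]; exact ⟨s, hs, hx⟩⟩
  exact ⟨s, hSK hs, c * g, mem_folnerBoundary_of_not_subset hSK hs (hx ▸ hxF) hnot, hx⟩

theorem one_sub_lt_ncard_div_of_sdiff_subset_mul_folnerBoundary {K F : Finset G} {U : Set G}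
    {ε : ℝ} (hK : K.Nonempty) (hF : F.Nonempty) (hUF : U ⊆ F)
    (hsdiff : (F : Set G) \ U ⊆ K * folnerBoundary K F) (hinv : IsTInvariant K (ε / K.card) F) :
    1 - ε < U.ncard / F.card := by
  set B := folnerBoundary K F
  have hKpos : (0 : ℝ) < K.card := by exact_mod_cast hK.card_pos
  have hFpos : (0 : ℝ) < F.card := by exact_mod_cast hF.card_pos
  have huncovered : (((F : Set G) \ U).ncard : ℝ) ≤ K.card * B.ncard := by
    have hcount := calc ((F : Set G) \ U).ncard
        ≤ ((K : Set G) * B).ncard :=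
          ncard_le_ncard hsdiff (K.finite_toSet.mul (folnerBoundary_finite K F))
      _ ≤ (K : Set G).ncard * B.ncard := Set.natCard_mul_le
      _ = K.card * B.ncard := by rw [ncard_coe_finset]
    exact_mod_cast hcount
  have hB : (B.ncard : ℝ) * K.card < ε * F.card := by
    rwa [IsTInvariant, div_lt_div_iff₀ hFpos hKpos] at hinv
  have hsdiff_card : (((F : Set G) \ U).ncard : ℝ) = F.card - U.ncard := by
    rw [Set.cast_ncard_sdiff hUF F.finite_toSet, ncard_coe_finset]
  rw [lt_div_iff₀ hFpos]
  linarith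

end TilingCount

theorem finite_tiling_covers_invariant_sets_general
    (G : Type) [Group G]
    (T : Set (Set G)) (Shapes : Set (Set G)) (hT : IsFiniteTiling T Shapes) :
    ∀ ε : ℝ, 0 < ε → ∃ δ : ℝ, 0 < δ ∧ ∃ K : Finset G, K.Nonempty ∧
      ∀ g : G, ∀ F : Finset G, F.Nonempty → IsTInvariant K δ F →
        ((⋃₀ {t : Set G | (∃ t' ∈ T, t = tileTranslate t' g) ∧ t ⊆ (F : Set G)}).ncard : ℝ)
            / (F.card : ℝ) > 1 - ε := by
  obtain ⟨⟨-, hcover, -⟩, hShapesFin, hShapes, hrep⟩ := hT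
  intro ε hε
  have hKfin : (insert 1 (⋃₀ Shapes)).Finite :=
    (hShapesFin.sUnion fun S hS => (hShapes S hS).1).insert 1
  set K := hKfin.toFinset
  have hK : K.Nonempty := ⟨1, by simp [K]⟩
  have htiles : ∀ t ∈ T, ∃ S ⊆ (K : Set G), ∃ c, t = tileTranslate S c := fun t ht => by
    obtain ⟨S, hS, c, rfl⟩ := hrep t ht
    refine ⟨S, ?_, c, rfl⟩
    rw [hKfin.coe_toFinset]
    exact (subset_sUnion_of_mem hS).trans (subset_insert _ _)
  refine ⟨ε / K.card, div_pos hε (by exact_mod_cast hK.card_pos), K, hK, fun g F hF hinv => ?_⟩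
  exact one_sub_lt_ncard_div_of_sdiff_subset_mul_folnerBoundary hK hF
    (fun x ⟨_, ⟨_, hsub⟩, hx⟩ => hsub hx)
    (sdiff_sUnion_translate_subset_mul_folnerBoundary hcover htiles g F) hinv

/-- For a finite tiling `T` of a countably infinite amenable group `G` and any
`ε > 0`, there are `δ > 0` and a nonempty finite `K ⊆ G` such that for every `g ∈ G` and every
`(K,δ)`-invariant nonempty finite `F ⊆ G`, the union of the `Tg`-tiles contained in `F` occupies
a proportion larger than `1 - ε` of `F`. -/
theorem finite_tiling_covers_invariant_sets
    (G : Type) [Group G] [Countable G] [Infinite G] (hG : IsAmenable G)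
    (T : Set (Set G)) (Shapes : Set (Set G)) (hT : IsFiniteTiling T Shapes) :
    ∀ ε : ℝ, 0 < ε → ∃ δ : ℝ, 0 < δ ∧ ∃ K : Finset G, K.Nonempty ∧
      ∀ g : G, ∀ F : Finset G, F.Nonempty → IsTInvariant K δ F →
        ((⋃₀ {t : Set G | (∃ t' ∈ T, t = tileTranslate t' g) ∧ t ⊆ (F : Set G)}).ncard : ℝ)
            / (F.card : ℝ) > 1 - ε :=
  finite_tiling_covers_invariant_sets_general G T Shapes hT
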